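/- (Parseval for sparse characters, crude form) Let S be the injective tuples in (ℤ/nℤ)ⁿ and m ≤ n. Then ∑_{χ with at most m nonzero coordinates} |\widehat{1_S}(χ)|² ≤ (n^m/m!) · (n!/nⁿ)². -/

import Mathlib

/-! A character with at most `m` nonzero coordinates vanishes outside some `m`-set `T` of
coordinates, so the sum is at most the sum over the `n.choose m` coordinate subspaces
`supportedOn T`. On one such subspace, orthogonality of characters turns `∑ |1̂_S(r)|²` into
`n ^ (#T - 2n)` times the number of pairs of injective tuples agreeing on `T`, which is
`n! * (n - #T)!`. Since `n.choose m * (n - m)! = n! / m!`, this gives the bound. -/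

open Finset

/-- `e(x) = exp(2πi x/n)` for `x ∈ ZMod n`, realizing the identification of the dual of
`ZMod n` with `(1/n)ℤ/ℤ`. -/
noncomputable def eZ (n : ℕ) (x : ZMod n) : ℂ :=
  Complex.exp (2 * Real.pi * Complex.I * (x.val : ℂ) / (n : ℂ))

/-- The Fourier coefficient `\widehat{1_S}(r₁,…,r_n)` of the set `S` of injective
`n`-tuples in `(ZMod n)ⁿ`, namely `n^{-n} ∑_{x ∈ S} e(-∑ᵢ rᵢ xᵢ)`. -/
noncomputable def fourierS (n : ℕ) [NeZero n] (r : Fin n → ZMod n) : ℂ :=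
  ((n : ℂ) ^ n)⁻¹ *
    ∑ x ∈ Finset.univ.filter (fun x : Fin n → ZMod n => Function.Injective x),
      eZ n (-(∑ i, r i * x i))

lemma AddChar.map_sum_eq_prod {A M ι : Type*} [AddCommMonoid A] [CommMonoid M] (ψ : AddChar A M)
    (s : Finset ι) (f : ι → A) : ψ (∑ i ∈ s, f i) = ∏ i ∈ s, ψ (f i) :=
  map_prod ψ.toMonoidHom (fun i => Multiplicative.ofAdd (f i)) s

lemma Finset.sum_le_sum_of_subset_biUnion {ι α M : Type*} [DecidableEq α] [AddCommMonoid M]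
    [PartialOrder M] [IsOrderedAddMonoid M] {s : Finset ι} {t : ι → Finset α} {u : Finset α}
    (f : α → M) (hf : ∀ a, 0 ≤ f a) (hu : u ⊆ s.biUnion t) :
    ∑ a ∈ u, f a ≤ ∑ i ∈ s, ∑ a ∈ t i, f a :=
  calc ∑ a ∈ u, f a ≤ ∑ a ∈ s.sup t, f a :=
        sum_le_sum_of_subset_of_nonneg (by rwa [sup_eq_biUnion]) fun a _ _ => hf a
    _ ≤ _ := s.apply_sup_le_sum (f := fun v => ∑ a ∈ v, f a) sum_empty fun {v w} => by
        rw [sup_eq_union, ← sum_union_inter]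
        exact le_add_of_nonneg_right (sum_nonneg fun a _ => hf a)

section Injective

variable {α β : Type*} [Fintype α] [Fintype β] [DecidableEq α] [DecidableEq β]

lemma card_filter_injective :
    #{x : α → β | Function.Injective x} = (Fintype.card β).descFactorial (Fintype.card α) := by
  rw [← Fintype.card_subtype, Fintype.card_congr (Equiv.subtypeInjectiveEquivEmbedding α β),
    Fintype.card_embedding_eq]

lemma card_filter_perm_fixing (T : Finset α) :
    #{σ : Equiv.Perm α | ∀ a ∈ T, σ a = a} = (Fintype.card α - #T).factorial := by
  rw [← Fintype.card_subtype, ← Fintype.card_congr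
    ((Equiv.Perm.subtypeEquivSubtypePerm (· ∉ T)).trans
      (Equiv.subtypeEquivRight fun σ => by simp only [not_not])), Fintype.card_perm]
  simp

lemma card_filter_injective_eqOn (e : α ≃ β) (T : Finset α) :
    #{y : α → β | Function.Injective y ∧ ∀ a ∈ T, y a = e a} = (Fintype.card α - #T).factorial := by
  rw [← card_filter_perm_fixing T]
  symm
  refine card_bij (fun σ _ => e ∘ σ) ?_ ?_ ?_
  · intro σ hσ
    simp only [mem_filter, mem_univ, true_and] at hσ ⊢
    exact ⟨e.injective.comp σ.injective, fun a ha => by simp [hσ a ha]⟩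
  · intro σ _ τ _ h
    ext a
    exact e.injective (congrFun h a)
  · intro y hy
    simp only [mem_filter, mem_univ, true_and] at hy
    have hy' : Function.Bijective y :=
      (Fintype.bijective_iff_injective_and_card y).2 ⟨hy.1, Fintype.card_congr e⟩
    refine ⟨(Equiv.ofBijective y hy').trans e.symm, ?_, ?_⟩
    · simp only [mem_filter, mem_univ, true_and]
      intro a ha
      simp [hy.2 a ha]
    · ext a
      simp

lemma sum_card_filter_injective_eqOn (hcard : Fintype.card α = Fintype.card β) (T : Finset α) :
    ∑ x ∈ {x : α → β | Function.Injective x},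
        #{y ∈ {y : α → β | Function.Injective y} | ∀ a ∈ T, y a = x a} =
      (Fintype.card α).factorial * (Fintype.card α - #T).factorial := by
  rw [sum_const_nat (m := (Fintype.card α - #T).factorial) fun x hx => ?_, card_filter_injective,
    ← hcard, Nat.descFactorial_self]
  have hx : Function.Bijective x :=
    (Fintype.bijective_iff_injective_and_card x).2 ⟨(mem_filter.1 hx).2, hcard⟩
  simpa [filter_filter] using card_filter_injective_eqOn (Equiv.ofBijective x hx) T

end Injective

section SupportedOn

variable {ι R : Type*} [Fintype ι] [DecidableEq ι] [Zero R] [Fintype R]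

variable (R) in
def supportedOn (T : Finset ι) : Finset (ι → R) :=
  Fintype.piFinset fun i => if i ∈ T then univ else {0}

lemma mem_supportedOn {T : Finset ι} {r : ι → R} : r ∈ supportedOn R T ↔ ∀ i ∉ T, r i = 0 := by
  simp only [supportedOn, Fintype.mem_piFinset]
  refine forall_congr' fun i => ?_
  split_ifs with hi <;> simp [hi]

lemma filter_card_support_le_subset_biUnion [DecidableEq R] {m : ℕ} (hm : m ≤ Fintype.card ι) :
    ({r : ι → R | #{i | r i ≠ 0} ≤ m} : Finset (ι → R)) ⊆
      (powersetCard m univ).biUnion (supportedOn R) := by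
  intro r hr
  obtain ⟨T, hsupp, -, hT⟩ :=
    exists_subsuperset_card_eq (subset_univ _) (mem_filter.1 hr).2 (card_univ (α := ι) ▸ hm)
  refine mem_biUnion.2 ⟨T, mem_powersetCard.2 ⟨subset_univ T, hT⟩, mem_supportedOn.2 fun i hi => ?_⟩
  by_contra hri
  exact hi (hsupp (mem_filter.2 ⟨mem_univ i, hri⟩))

end SupportedOn

section Characters

variable {ι R : Type*} [Fintype ι] [DecidableEq ι] [CommRing R] [Fintype R] [DecidableEq R]

lemma sum_supportedOn_addChar {K : Type*} [CommRing K] [IsDomain K]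
    {ψ : AddChar R K} (hψ : ψ.IsPrimitive) (T : Finset ι) (d : ι → R) :
    ∑ r ∈ supportedOn R T, ψ (∑ i, r i * d i) =
      if ∀ i ∈ T, d i = 0 then (Fintype.card R : K) ^ #T else 0 := by
  have hcoord (i : ι) : ∑ c ∈ (if i ∈ T then univ else {0} : Finset R), ψ (c * d i) =
      if i ∈ T then (if d i = 0 then (Fintype.card R : K) else 0) else 1 := by
    split_ifs with hi <;> simp [AddChar.sum_mulShift _ hψ, *]
  simp_rw [AddChar.map_sum_eq_prod]
  rw [supportedOn, ← prod_univ_sum _ fun i c => ψ (c * d i), prod_congr rfl fun i _ => hcoord i,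
    prod_ite_mem, univ_inter, prod_ite_zero, prod_const]
  congr

lemma sum_supportedOn_norm_sq_sum_addChar {ψ : AddChar R ℂ} (hψ : ψ.IsPrimitive)
    (T : Finset ι) (A : Finset (ι → R)) :
    ∑ r ∈ supportedOn R T, ‖∑ x ∈ A, ψ (-∑ i, r i * x i)‖ ^ 2 =
      Fintype.card R ^ #T * ∑ x ∈ A, #{y ∈ A | ∀ i ∈ T, y i = x i} := by
  apply Complex.ofReal_injective
  push_cast
  simp_rw [← Complex.mul_conj', map_sum, ← AddChar.map_neg_eq_conj, neg_neg, sum_mul_sum,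
    ← AddChar.map_add_eq_mul]
  rw [sum_comm, mul_sum]
  refine sum_congr rfl fun x _ => ?_
  have hphase (r y : ι → R) : -∑ i, r i * x i + ∑ i, r i * y i = ∑ i, r i * (y i - x i) := by
    simp only [mul_sub, sum_sub_distrib]
    ring
  simp_rw [hphase]
  rw [sum_comm]
  simp_rw [sum_supportedOn_addChar hψ, sub_eq_zero]
  rw [← sum_filter, sum_const, nsmul_eq_mul, mul_comm]

end Characters

lemma eZ_eq_stdAddChar (n : ℕ) [NeZero n] : eZ n = ZMod.stdAddChar := by
  ext x
  rw [ZMod.stdAddChar_apply, ZMod.toCircle_apply, eZ]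

lemma sum_supportedOn_norm_fourierS_sq (n : ℕ) [NeZero n] (T : Finset (Fin n)) :
    ∑ r ∈ supportedOn (ZMod n) T, ‖fourierS n r‖ ^ 2 =
      n ^ #T * (n.factorial * (n - #T).factorial) / ((n : ℝ) ^ n) ^ 2 := by
  simp only [fourierS, eZ_eq_stdAddChar, norm_mul, mul_pow, ← mul_sum]
  rw [sum_supportedOn_norm_sq_sum_addChar (ZMod.isPrimitive_stdAddChar n),
    sum_card_filter_injective_eqOn (by simp)]
  simp only [ZMod.card, Fintype.card_fin, norm_inv, norm_pow, Complex.norm_natCast]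
  push_cast
  field_simp

/-- Crude sparseval: the sum of `|\widehat{1_S}(χ)|²` over characters with at most `m`
nonzero coordinates is at most `(n^m/m!)(n!/nⁿ)²`. -/
theorem sparseval_crude (n m : ℕ) [NeZero n] (hm : m ≤ n) :
    ∑ r ∈ Finset.univ.filter
        (fun r : Fin n → ZMod n => (Finset.univ.filter (fun i => r i ≠ 0)).card ≤ m),
      ‖fourierS n r‖ ^ 2 ≤
    ((n : ℝ) ^ m / m.factorial) * ((n.factorial : ℝ) / (n : ℝ) ^ n) ^ 2 := by
  calc _ ≤ ∑ T ∈ powersetCard m univ, ∑ r ∈ supportedOn (ZMod n) T, ‖fourierS n r‖ ^ 2 :=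
        sum_le_sum_of_subset_biUnion _ (fun _ => sq_nonneg _)
          (filter_card_support_le_subset_biUnion (by rwa [Fintype.card_fin]))
    _ = n.choose m * (n ^ m * (n.factorial * (n - m).factorial) / ((n : ℝ) ^ n) ^ 2) := by
        rw [sum_congr rfl fun T hT => by
            rw [sum_supportedOn_norm_fourierS_sq, (mem_powersetCard.1 hT).2],
          sum_const, card_powersetCard, card_univ, Fintype.card_fin, nsmul_eq_mul]
    _ = _ := by
        rw [Nat.cast_choose ℝ hm]
        field_simp
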